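/- In the partial algebra of inhabited subsets of 𝔾 × Ar with the collecting application, the map sending x ∈ F_σ to the singleton {(x, σ)} is an embedding of partial algebras from the finite-type structure 𝔽 into the algebra: for f ∈ F_{(σ)τ} and x ∈ F_σ, the application {(f, στ)}·{(x, σ)} is defined and equals {(f(x), τ)}. -/

import Mathlib

/-- The von Neumann numeral of `n`. -/
def natEmbed : ℕ → ZFSet
  | 0 => ∅
  | n + 1 => insert (natEmbed n) (natEmbed n)

/-- Finite types: the ground type `o` and arrow types `(σ)τ`. -/
inductive FType : Type
  | o : FType
  | arrow : FType → FType → FType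

/-- The set-theoretic extension of a finite type: `F_o = ω` and
`F_{(σ)τ}` is the set of all total (set) functions from `F_σ` to `F_τ`. -/
def Fext : FType → ZFSet
  | .o => ZFSet.omega
  | .arrow σ τ => ZFSet.funs (Fext σ) (Fext τ)

/-- The dependent product `∏_{n∈ℕ} Fₙ`: the set of functions `f` with domain `ω`
such that `f(n) ∈ Fₙ` for all `n`. -/
noncomputable def depProd (F : ℕ → ZFSet) : ZFSet :=
  ZFSet.sep
    (fun f => ∀ (n : ℕ) (y : ZFSet), ZFSet.pair (natEmbed n) y ∈ f → y ∈ F n)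
    (ZFSet.funs ZFSet.omega (ZFSet.sUnion (ZFSet.range F)))

/-- `𝐆`: the smallest collection of sets containing `ω`, closed under function
spaces and under countable dependent products. -/
inductive InG : ZFSet → Prop
  | omega : InG ZFSet.omega
  | funs {F G : ZFSet} : InG F → InG G → InG (ZFSet.funs F G)
  | prod (F : ℕ → ZFSet) : (∀ n, InG (F n)) → InG (depProd F)

/-- Arities: `o`; `p₀⋯pₙ → q` (at least one argument); countable products
`∏_{n∈ℕ} pₙ`. -/
inductive Arity : Type
  | o : Arity
  | arr : Arity → List Arity → Arity → Arity   -- `arr p ps q` is `p ps… → q`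
  | prod : (ℕ → Arity) → Arity

/-- Iterated set-theoretic function application `x y₀ ⋯ yₖ = z` (as a relation
via Kuratowski pairs). -/
def zAppList : ZFSet → List ZFSet → ZFSet → Prop
  | x, [], z => x = z
  | x, y :: ys, z => ∃ w : ZFSet, ZFSet.pair y w ∈ x ∧ zAppList w ys z

/-- Application of an arity-tagged element of `𝔾 × Ar` to a tuple:
`(x, p₀⋯pₙ→q)((y₀,p₀),…,(yₙ,pₙ)) ≃ (x y₀⋯yₙ, q)`, and
`(x, ∏ₘ pₘ)((m,o)) ≃ (x(m), pₘ)`. -/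
def appTuple : ZFSet × Arity → List (ZFSet × Arity) → ZFSet × Arity → Prop
  | (x, .arr p ps q), ys, (z, q') =>
      q' = q ∧ ys.map Prod.snd = p :: ps ∧ zAppList x (ys.map Prod.fst) z
  | (x, .prod pm), ys, (z, q) =>
      ∃ m : ℕ, ys = [(natEmbed m, .o)] ∧ q = pm m ∧ ZFSet.pair (natEmbed m) z ∈ x
  | (_, .o), _, _ => False

/-- The collecting application on subsets of `𝔾 × Ar`: `a·b` collects all
results of applying elements of `a` to tuples of elements of `b`; it is
defined iff the resulting set is inhabited. -/
def coll (a b : Set (ZFSet × Arity)) : Set (ZFSet × Arity) :=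
  { z | ∃ x ∈ a, ∃ ys : List (ZFSet × Arity), (∀ y ∈ ys, y ∈ b) ∧ appTuple x ys z }

/-- The carrier `𝔾 × Ar` (first components in `⋃𝐆`). -/
def Gr : Set (ZFSet × Arity) := { w | ∃ G : ZFSet, InG G ∧ w.1 ∈ G }

/-- The inner part `{(y, x) | y ∈ G}` of the curried constant function. -/
noncomputable def kInner (G x : ZFSet) : ZFSet :=
  ZFSet.sep (fun q => ∃ y ∈ G, q = ZFSet.pair y x)
    (ZFSet.powerset (ZFSet.powerset (G ∪ {x})))

/-- The curried first projection `k_{FG} : F → G → F`, `k_{FG} x y = x`. -/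
noncomputable def kFun (F G : ZFSet) : ZFSet :=
  ZFSet.sep (fun w => ∃ x ∈ F, w = ZFSet.pair x (kInner G x))
    (ZFSet.powerset (ZFSet.powerset
      (F ∪ ZFSet.powerset (ZFSet.powerset (ZFSet.powerset (F ∪ G))))))

/-- Identification of finite types with arities. -/
def tyAr : FType → Arity
  | .o => .o
  | .arrow σ τ => .arr (tyAr σ) [] (tyAr τ)

/-! Applying `(f, p → q)` to a tuple from `{(x, p)}` forces the tuple to be the single element
`(x, p)`, so the collecting application is `{(z, q) | (x, z) ∈ f}`; for a total function `f`
on `F_σ` and `x ∈ F_σ` this set is exactly `{(f(x), q)}`. -/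

theorem zAppList_singleton_iff {f y z : ZFSet} : zAppList f [y] z ↔ ZFSet.pair y z ∈ f := by
  simp [zAppList]

theorem appTuple_arr_nil_iff {f z : ZFSet} {p q q' : Arity} {ys : List (ZFSet × Arity)} :
    appTuple (f, .arr p [] q) ys (z, q') ↔ ∃ y, ys = [(y, p)] ∧ q' = q ∧ ZFSet.pair y z ∈ f := by
  constructor
  · rintro ⟨rfl, hsnd, happ⟩
    obtain ⟨⟨y, p'⟩, rfl⟩ : ∃ w, ys = [w] := List.length_eq_one_iff.mp <| by
      simpa using congrArg List.length hsnd
    obtain rfl : p' = p := by simpa using hsnd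
    exact ⟨y, rfl, rfl, zAppList_singleton_iff.mp happ⟩
  · rintro ⟨y, rfl, rfl, hyz⟩
    exact ⟨rfl, rfl, zAppList_singleton_iff.mpr hyz⟩

theorem coll_singleton_arr_nil (f x : ZFSet) (p q : Arity) :
    coll {(f, .arr p [] q)} {(x, p)} = {w | w.2 = q ∧ ZFSet.pair x w.1 ∈ f} := by
  ext ⟨z, q'⟩
  simp only [coll, Set.mem_singleton_iff, exists_eq_left, appTuple_arr_nil_iff, Set.mem_ofPred_eq]
  constructor
  · rintro ⟨ys, hys, y, rfl, rfl, hyz⟩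
    obtain ⟨rfl, -⟩ := Prod.mk.inj (hys _ (List.mem_singleton_self _))
    exact ⟨rfl, hyz⟩
  · rintro ⟨rfl, hxz⟩
    exact ⟨[(x, p)], by simp, x, rfl, rfl, hxz⟩

theorem ZFSet.IsFunc.eq_of_pair_mem {A B f x y z : ZFSet} (hf : A.IsFunc B f) (hx : x ∈ A)
    (hxy : ZFSet.pair x y ∈ f) (hxz : ZFSet.pair x z ∈ f) : z = y :=
  (hf.2 x hx).unique hxz hxy

/-- `x ↦ {(x, σ)}` is an embedding of partial algebras of `𝔽` into the algebra
of inhabited subsets of `𝔾 × Ar`: for `f ∈ F_{(σ)τ}` and `x ∈ F_σ`,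
`{(f, στ)}·{(x, σ)}` is defined and equals `{(f(x), τ)}`. -/
theorem singleton_embedding (σ τ : FType) (f x y : ZFSet)
    (hf : f ∈ Fext (.arrow σ τ)) (hx : x ∈ Fext σ) (hxy : ZFSet.pair x y ∈ f) :
    (coll {(f, tyAr (.arrow σ τ))} {(x, tyAr σ)}).Nonempty ∧
    coll {(f, tyAr (.arrow σ τ))} {(x, tyAr σ)} = {(y, tyAr τ)} := by
  have hfun : (Fext σ).IsFunc (Fext τ) f := ZFSet.mem_funs.mp hf
  have hcoll : coll {(f, tyAr (.arrow σ τ))} {(x, tyAr σ)} = {(y, tyAr τ)} := by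
    rw [tyAr, coll_singleton_arr_nil]
    ext ⟨z, q⟩
    simp only [Set.mem_ofPred_eq, Set.mem_singleton_iff, Prod.mk.injEq]
    exact ⟨fun ⟨hq, hxz⟩ => ⟨hfun.eq_of_pair_mem hx hxy hxz, hq⟩, fun ⟨hz, hq⟩ => ⟨hq, hz ▸ hxy⟩⟩
  exact ⟨hcoll ▸ Set.singleton_nonempty _, hcoll⟩
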